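/- arXiv:1804.02321 — 4 statements merged into one kernel-verified Lean document; each statement's English description precedes it below -/
import Mathlib

section
/- Let ε > 0, t ≥ 1, and C ≥ 2·ln(2/ε). Then for all real θ, |cos^t(θ) − ∑_{l=0}^{⌈√(Ct)⌉} p_l cos(lθ)| ≤ ε, where p_l are the Chebyshev expansion coefficients of x^t. -/
/-!
Expanding `(e^z + e^{-z})^t` binomially and pairing the terms `k` and `t - k` gives
`cosh^t z = ∑ p_l cosh(l z)` for complex `z`; at `z = iθ` this is `cos^t θ = ∑ p_l cos(lθ)`.
Since the `p_l` are nonnegative, the truncation error at `N` is at most the tail `∑_{l > N} p_l`.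
The same identity at real `z = c ≥ 0` bounds that tail Chernoff-style by
`2 e^{-cN} cosh^t c ≤ 2 e^{-cN + tc²/2}`, which for `c = N/t` is `2 e^{-N²/(2t)} ≤ ε`.
-/

open Finset Real

/-- Coefficients of the Chebyshev expansion of `x^t`: `p t l = P(|X_t| = l)` for a
`t`-step simple random walk on `ℤ` started at the origin. -/
noncomputable def chebCoeff (t l : ℕ) : ℝ :=
  if l = 0 then (if t % 2 = 0 then (t.choose (t / 2) : ℝ) / 2 ^ t else 0)
  else if l ≤ t ∧ l % 2 = t % 2 then (t.choose ((t - l) / 2) : ℝ) / 2 ^ (t - 1) else 0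

lemma chebCoeff_nonneg (t l : ℕ) : 0 ≤ chebCoeff t l := by
  unfold chebCoeff; split_ifs <;> positivity

lemma chebCoeff_eq_zero_of_lt {t l : ℕ} (h : t < l) : chebCoeff t l = 0 := by
  simp only [chebCoeff]
  rw [if_neg (by omega), if_neg (by omega)]

-- A walk with `k` up-steps out of `t` ends at `2k - t`, so this says `2^t P(|X_t| = l) = 2^t p_l`.
lemma sum_choose_filter_dist_eq_chebCoeff (t l : ℕ) :
    ∑ k ∈ range (t + 1) with Nat.dist (2 * k) t = l, (t.choose k : ℝ) =
      2 ^ t * chebCoeff t l := by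
  unfold chebCoeff Nat.dist
  split_ifs
  · have : {k ∈ range (t + 1) | 2 * k - t + (t - 2 * k) = l} = {t / 2} := by
      ext k; simp only [mem_filter, mem_range, mem_singleton]; omega
    rw [this, sum_singleton]; field_simp
  · have : {k ∈ range (t + 1) | 2 * k - t + (t - 2 * k) = l} = ∅ := by
      ext k; simp only [mem_filter, mem_range, notMem_empty, iff_false]; omega
    simp [this]
  · have : {k ∈ range (t + 1) | 2 * k - t + (t - 2 * k) = l} = {(t - l) / 2, (t + l) / 2} := by
      ext k; simp only [mem_filter, mem_range, mem_insert, mem_singleton]; omega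
    rw [this, sum_pair (by omega), ← Nat.choose_symm (k := (t + l) / 2) (by omega),
      show t - (t + l) / 2 = (t - l) / 2 by omega, show (2 : ℝ) ^ t = 2 * 2 ^ (t - 1) by
        rw [← pow_succ']; congr 1; omega]
    field_simp; ring
  · have : {k ∈ range (t + 1) | 2 * k - t + (t - 2 * k) = l} = ∅ := by
      ext k; simp only [mem_filter, mem_range, notMem_empty, iff_false]; omega
    simp [this]

lemma sum_choose_mul_dist_eq_chebCoeff (t : ℕ) (f : ℕ → ℂ) :
    ∑ k ∈ range (t + 1), (t.choose k : ℂ) * f (Nat.dist (2 * k) t) =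
      2 ^ t * ∑ l ∈ range (t + 1), (chebCoeff t l : ℂ) * f l := by
  have hmaps : ∀ k ∈ range (t + 1), Nat.dist (2 * k) t ∈ range (t + 1) := by
    intro k hk; simp only [mem_range, Nat.dist] at hk ⊢; omega
  rw [← sum_fiberwise_of_maps_to hmaps, mul_sum]
  refine sum_congr rfl fun l _ => ?_
  rw [sum_congr rfl fun k hk => by rw [(mem_filter.1 hk).2], ← sum_mul, ← mul_assoc]
  exact_mod_cast congrArg (fun x : ℝ => (x : ℂ) * f l) (sum_choose_filter_dist_eq_chebCoeff t l)

lemma Complex.two_cosh_pow_eq_sum_choose (t : ℕ) (z : ℂ) :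
    (2 * Complex.cosh z) ^ t =
      ∑ k ∈ range (t + 1), (t.choose k : ℂ) * Complex.cosh (Nat.dist (2 * k) t * z) := by
  have hterm : ∀ k ∈ range (t + 1),
      Complex.exp z ^ k * Complex.exp (-z) ^ (t - k) * t.choose k +
        Complex.exp (-z) ^ k * Complex.exp z ^ (t - k) * t.choose k =
      2 * ((t.choose k : ℂ) * Complex.cosh (Nat.dist (2 * k) t * z)) := by
    intro k hk
    have hkt : k ≤ t := Nat.lt_succ_iff.1 (mem_range.1 hk)
    rw [mul_left_comm, Complex.two_cosh]
    simp only [← Complex.exp_nat_mul, ← Complex.exp_add]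
    rw [Nat.cast_sub hkt]
    rcases le_total t (2 * k) with h | h
    · rw [Nat.dist_comm, Nat.dist_eq_sub_of_le h, Nat.cast_sub h]; push_cast; ring_nf
    · rw [Nat.dist_eq_sub_of_le h, Nat.cast_sub h]; push_cast; ring_nf
  apply mul_left_cancel₀ (two_ne_zero (α := ℂ))
  rw [mul_sum, ← sum_congr rfl hterm, sum_add_distrib, two_mul, ← add_pow, Complex.two_cosh,
    ← add_pow, add_comm (Complex.exp (-z))]

lemma Complex.cosh_pow_eq_sum_chebCoeff (t : ℕ) (z : ℂ) :
    Complex.cosh z ^ t = ∑ l ∈ range (t + 1), (chebCoeff t l : ℂ) * Complex.cosh (l * z) := by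
  apply mul_left_cancel₀ (pow_ne_zero t (two_ne_zero (α := ℂ)))
  rw [← mul_pow, Complex.two_cosh_pow_eq_sum_choose,
    sum_choose_mul_dist_eq_chebCoeff t fun l => Complex.cosh (l * z)]

lemma Real.cosh_pow_eq_sum_chebCoeff (t : ℕ) (x : ℝ) :
    cosh x ^ t = ∑ l ∈ range (t + 1), chebCoeff t l * cosh (l * x) := by
  exact_mod_cast Complex.cosh_pow_eq_sum_chebCoeff t x

lemma Real.cos_pow_eq_sum_chebCoeff (t : ℕ) (θ : ℝ) :
    cos θ ^ t = ∑ l ∈ range (t + 1), chebCoeff t l * cos (l * θ) := by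
  have h := Complex.cosh_pow_eq_sum_chebCoeff t (θ * Complex.I)
  simp only [← mul_assoc, Complex.cosh_mul_I] at h
  exact_mod_cast h

lemma cos_pow_sub_sum_chebCoeff_eq_tail (t N : ℕ) (θ : ℝ) :
    cos θ ^ t - ∑ l ∈ range (N + 1), chebCoeff t l * cos (l * θ) =
      ∑ l ∈ range (t + 1) with N < l, chebCoeff t l * cos (l * θ) := by
  have hhead : ∑ l ∈ range (t + 1) with ¬N < l, chebCoeff t l * cos (l * θ) =
      ∑ l ∈ range (N + 1), chebCoeff t l * cos (l * θ) := by
    refine sum_subset (fun l hl => ?_) (fun l hl hl' => ?_)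
    · simp only [mem_filter, mem_range] at hl ⊢; omega
    · simp only [mem_filter, mem_range] at hl hl'
      rw [chebCoeff_eq_zero_of_lt (by omega), zero_mul]
  rw [Real.cos_pow_eq_sum_chebCoeff, ← sum_filter_add_sum_filter_not _ (N < ·), hhead,
    add_sub_cancel_right]

lemma sum_chebCoeff_tail_le_cosh_pow (t N : ℕ) {c : ℝ} (hc : 0 ≤ c) :
    ∑ l ∈ range (t + 1) with N < l, chebCoeff t l ≤ 2 * exp (-(c * N)) * cosh c ^ t := by
  have hterm : ∀ l ∈ range (t + 1), N < l →
      chebCoeff t l ≤ chebCoeff t l * (2 * exp (-(c * N)) * cosh (l * c)) := by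
    intro l _ hl
    have hNl : c * N ≤ l * c := by rw [mul_comm]; gcongr
    have hmoment : 1 ≤ 2 * exp (-(c * N)) * cosh (l * c) := by
      rw [cosh_eq]
      calc (1 : ℝ) = exp (-(c * N)) * exp (c * N) := by rw [← exp_add, neg_add_cancel, exp_zero]
        _ ≤ exp (-(c * N)) * (exp (l * c) + exp (-(l * c))) := by
          gcongr; linarith [exp_le_exp.2 hNl, exp_pos (-(l * c))]
        _ = 2 * exp (-(c * N)) * ((exp (l * c) + exp (-(l * c))) / 2) := by ring
    exact le_mul_of_one_le_right (chebCoeff_nonneg t l) hmoment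
  calc ∑ l ∈ range (t + 1) with N < l, chebCoeff t l
      ≤ ∑ l ∈ range (t + 1) with N < l, chebCoeff t l * (2 * exp (-(c * N)) * cosh (l * c)) :=
        sum_le_sum fun l hl => hterm l (mem_filter.1 hl).1 (mem_filter.1 hl).2
    _ ≤ ∑ l ∈ range (t + 1), chebCoeff t l * (2 * exp (-(c * N)) * cosh (l * c)) :=
        sum_le_sum_of_subset_of_nonneg (filter_subset _ _) fun l _ _ => by
          have := chebCoeff_nonneg t l; positivity
    _ = 2 * exp (-(c * N)) * cosh c ^ t := by
        rw [Real.cosh_pow_eq_sum_chebCoeff, mul_sum]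
        exact sum_congr rfl fun l _ => by ring

lemma sum_chebCoeff_tail_le (t N : ℕ) :
    ∑ l ∈ range (t + 1) with N < l, chebCoeff t l ≤ 2 * exp (-(N ^ 2 / (2 * t))) := by
  rcases Nat.eq_zero_or_pos t with rfl | ht
  · rw [filter_eq_empty_iff.2 (by simp), sum_empty]; positivity
  set c : ℝ := N / t with hc
  have hexponent : -(c * N) + t * (c ^ 2 / 2) = -(N ^ 2 / (2 * t)) := by
    rw [hc]; field_simp; ring
  calc ∑ l ∈ range (t + 1) with N < l, chebCoeff t l ≤ 2 * exp (-(c * N)) * cosh c ^ t :=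
        sum_chebCoeff_tail_le_cosh_pow t N (by positivity)
    _ ≤ 2 * exp (-(c * N)) * exp (c ^ 2 / 2) ^ t := by gcongr; exact cosh_le_exp_half_sq c
    _ = 2 * exp (-(N ^ 2 / (2 * t))) := by
        rw [← exp_nat_mul, mul_assoc, ← exp_add, hexponent]

theorem truncated_chebyshev_approx (ε : ℝ) (hε : 0 < ε) (t : ℕ) (ht : 1 ≤ t)
    (C : ℝ) (hC : 2 * Real.log (2 / ε) ≤ C) (θ : ℝ) :
    |Real.cos θ ^ t -
      ∑ l ∈ Finset.range (⌈Real.sqrt (C * t)⌉₊ + 1), chebCoeff t l * Real.cos (l * θ)| ≤ ε := by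
  set N := ⌈√(C * t)⌉₊
  have hCN : C * t ≤ N ^ 2 := (sqrt_le_left (Nat.cast_nonneg N)).1 (Nat.le_ceil _)
  have htR : (0 : ℝ) < t := by exact_mod_cast ht
  rw [cos_pow_sub_sum_chebCoeff_eq_tail]
  calc |∑ l ∈ range (t + 1) with N < l, chebCoeff t l * cos (l * θ)|
      ≤ ∑ l ∈ range (t + 1) with N < l, chebCoeff t l := by
        refine (abs_sum_le_sum_abs _ _).trans (sum_le_sum fun l _ => ?_)
        rw [abs_mul, abs_of_nonneg (chebCoeff_nonneg t l)]
        exact mul_le_of_le_one_right (chebCoeff_nonneg t l) (abs_cos_le_one _)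
    _ ≤ 2 * exp (-(N ^ 2 / (2 * t))) := sum_chebCoeff_tail_le t N
    _ ≤ 2 * exp (-log (2 / ε)) := by
        gcongr
        rw [le_div_iff₀ (by positivity)]; nlinarith
    _ = ε := by rw [exp_neg, exp_log (by positivity)]; field_simp
end

section
/- Let U be a self-adjoint unitary operator (U = U† and U² = I) on a Hilbert space H, and let Π be an orthogonal projection on H. Define W = (2Π − I)·U. Then for every t ≥ 0, Π W^t ψ = T_t(ΠUΠ) ψ for every ψ in the image of Π, where T_t is the t-th Chebyshev polynomial of the first kind. -/
open Polynomial

/-- Szegedy's lemma: for a self-adjoint unitary `U` and an orthogonal projection `Π`,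
the projection of powers of `W = (2Π − I)U` onto `im Π` is given by Chebyshev
polynomials of the projected operator `ΠUΠ`. -/
theorem szegedy_projected_walk_chebyshev
    {H : Type*} [NormedAddCommGroup H] [InnerProductSpace ℂ H] [CompleteSpace H]
    (U P : H →L[ℂ] H)
    (hUsa : IsSelfAdjoint U) (hU2 : U * U = 1)
    (hPsa : IsSelfAdjoint P) (hP2 : P * P = P)
    (t : ℕ) (ψ : H) (hψ : P ψ = ψ) :
    P (((((2 : ℂ) • P - 1) * U) ^ t) ψ) =
      (Polynomial.aeval (P * U * P) (Polynomial.Chebyshev.T ℂ (t : ℤ))) ψ := by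
  set W : H →L[ℂ] H := ((2 : ℂ) • P - 1) * U with hW
  have hPW : P * W = P * U := by
    have h : (2 : ℂ) • P - P = P := by rw [two_smul]; abel
    rw [hW, ← mul_assoc, mul_sub, mul_one, mul_smul_comm, hP2, h]
  have key : P * U * W = P * U * P * (P * U) + P * U * P * (P * U) - P := by
    have k1 : P * U * W = P * U * P * U + P * U * P * U - P := by
      rw [hW, two_smul]
      calc P * U * ((P + P - 1) * U)
          = P * U * P * U + P * U * P * U - P * (U * U) := by noncomm_ring
        _ = P * U * P * U + P * U * P * U - P := by rw [hU2, mul_one]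
    have k2 : P * U * P * U = P * U * P * (P * U) := by
      calc P * U * P * U = P * U * (P * P) * U := by rw [hP2]
        _ = P * U * P * (P * U) := by noncomm_ring
    rw [k1, k2]
  have hstep : ∀ n : ℕ, P * W ^ (n + 2) =
      (P * U * P) * (P * W ^ (n + 1)) + (P * U * P) * (P * W ^ (n + 1))
        - P * W ^ n := by
    intro n
    have h1 : P * W ^ (n + 2) = (P * U * W) * W ^ n := by
      rw [show n + 2 = 1 + (1 + n) by ring, pow_add, pow_add, pow_one, ← mul_assoc,
        hPW, mul_assoc, ← mul_assoc, mul_assoc (P * U) W]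
    have hPUW : (P * U) * W ^ n = P * W ^ (n + 1) := by
      rw [← hPW, mul_assoc, ← pow_succ']
    have hx : (P * U * P) * (P * U) * W ^ n = (P * U * P) * (P * W ^ (n + 1)) := by
      rw [mul_assoc, hPUW]
    rw [h1, key, sub_mul, add_mul, hx]
  suffices h : ∀ n : ℕ, P ((W ^ n) ψ) = (Polynomial.aeval (P * U * P)
      (Polynomial.Chebyshev.T ℂ (n : ℤ))) ψ ∧
      P ((W ^ (n + 1)) ψ) = (Polynomial.aeval (P * U * P)
      (Polynomial.Chebyshev.T ℂ ((n : ℤ) + 1))) ψ by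
    exact (h t).1
  intro n
  induction n with
  | zero =>
    constructor
    · simpa [Polynomial.Chebyshev.T_zero] using hψ
    · have h1 : P (W ψ) = (P * U * P) ψ := by
        have h0 : P (W ψ) = (P * W) ψ := rfl
        rw [h0, hPW]
        show P (U ψ) = P (U (P ψ))
        rw [hψ]
      simpa [Polynomial.Chebyshev.T_one] using h1
  | succ n ih =>
    refine ⟨ih.2, ?_⟩
    have hT := Polynomial.Chebyshev.T_add_two ℂ (n : ℤ)
    have hcast : ((n + 1 : ℕ) : ℤ) + 1 = (n : ℤ) + 2 := by push_cast; ring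
    rw [hcast, hT]
    have hA : P ((W ^ (n + 1 + 1)) ψ) = (P * W ^ (n + 2)) ψ := rfl
    rw [hA, hstep n]
    simp only [map_sub, map_mul, map_ofNat, Polynomial.aeval_X,
      ContinuousLinearMap.sub_apply, ContinuousLinearMap.add_apply,
      ContinuousLinearMap.mul_apply, two_mul]
    have h1 : (P * W ^ (n + 1)) ψ = P ((W ^ (n + 1)) ψ) := rfl
    have h2 : (P * W ^ n) ψ = P ((W ^ n) ψ) := rfl
    rw [ih.1, ih.2]
    have hPP : ∀ x : H, P (P x) = P x := fun x => by
      have := congrArg (fun (A : H →L[ℂ] H) => A x) hP2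
      simpa using this
    simp only [map_add, Polynomial.aeval_X, ContinuousLinearMap.add_apply,
      ContinuousLinearMap.mul_apply, hPP]
end

section
/- Let ψ be a unit vector in a Hilbert space and Π an orthogonal projection with Πψ ≠ 0. Write sin θ = ‖Πψ‖ with θ ∈ (0, π/2], let R_ψ = 2|ψ⟩⟨ψ| − I and R_Π = 2Π − I, and let m = ⌊π/(4θ)⌋. Then ‖ Π·(−R_ψ R_Π)^m ψ ‖² ≥ max(sin²θ, 1 − sin²θ) ≥ 1/2. -/
/-!
On the plane spanned by `u = Πψ` and `v = ψ - Πψ` the iterate `-R_ψ R_Π` acts, in the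
orthonormal coordinates `(a ‖u‖, b ‖v‖)` of `a u + b v`, as the rotation by `2θ`. Since `ψ` has
coordinates `(sin θ, cos θ)`, after `k` steps `‖Π (-R_ψ R_Π)^k ψ‖ = |sin ((2k+1)θ)|`.
The choice `m = ⌊π/(4θ)⌋` puts `(2m+1)θ` within `θ` of `π/2` and within `[θ, π - θ]`,
so `sin ((2m+1)θ)` dominates both `cos θ` and `sin θ`.
-/

open Real RealInnerProductSpace

namespace Real

lemma sin_le_sin_of_le_of_le_pi_sub {a x : ℝ} (ha : -(π / 2) ≤ a) (hax : a ≤ x)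
    (hxa : x ≤ π - a) : sin a ≤ sin x := by
  rw [← cos_sub_pi_div_two x, ← cos_abs, ← cos_pi_div_two_sub a]
  exact cos_le_cos_of_nonneg_of_le_pi (abs_nonneg _) (by linarith)
    (abs_le.2 ⟨by linarith, by linarith⟩)

end Real

section Trigonometry

variable {θ : ℝ}

lemma odd_floor_mul_mem_Icc_pi_div_two (hθ : 0 < θ) :
    (2 * (⌊π / (4 * θ)⌋₊ : ℝ) + 1) * θ ∈ Set.Icc (π / 2 - θ) (π / 2 + θ) := by
  have h4θ : 0 < 4 * θ := by positivity
  have hle := (le_div_iff₀ h4θ).1 (Nat.floor_le (div_nonneg pi_pos.le h4θ.le))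
  have hlt := (div_lt_iff₀ h4θ).1 (Nat.lt_floor_add_one (π / (4 * θ)))
  constructor <;> nlinarith

lemma odd_floor_mul_mem_Icc_pi_sub (hθ0 : 0 < θ) (hθ1 : θ ≤ π / 2) :
    (2 * (⌊π / (4 * θ)⌋₊ : ℝ) + 1) * θ ∈ Set.Icc θ (π - θ) := by
  have h4θ : 0 < 4 * θ := by positivity
  have hle := (le_div_iff₀ h4θ).1 (Nat.floor_le (div_nonneg pi_pos.le h4θ.le))
  refine ⟨by nlinarith [Nat.cast_nonneg (α := ℝ) ⌊π / (4 * θ)⌋₊], ?_⟩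
  rcases Nat.eq_zero_or_pos ⌊π / (4 * θ)⌋₊ with h0 | hpos
  · rw [h0]; push_cast; linarith
  · -- a positive floor forces `θ ≤ π/4`, hence `(2m + 2)θ ≤ 4mθ ≤ π`
    have h1 : (1 : ℝ) ≤ ⌊π / (4 * θ)⌋₊ := by exact_mod_cast hpos
    nlinarith

lemma max_sin_sq_one_sub_sin_sq_le (hθ0 : 0 < θ) (hθ1 : θ ≤ π / 2) :
    max (sin θ ^ 2) (1 - sin θ ^ 2) ≤ sin ((2 * (⌊π / (4 * θ)⌋₊ : ℝ) + 1) * θ) ^ 2 := by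
  set x := (2 * (⌊π / (4 * θ)⌋₊ : ℝ) + 1) * θ
  obtain ⟨hlo, hhi⟩ := odd_floor_mul_mem_Icc_pi_div_two hθ0
  obtain ⟨hlo', hhi'⟩ := odd_floor_mul_mem_Icc_pi_sub hθ0 hθ1
  have hsin : sin θ ≤ sin x := sin_le_sin_of_le_of_le_pi_sub (by linarith) hlo' hhi'
  have hcos : cos θ ≤ sin x := by
    rw [← sin_pi_div_two_sub]
    exact sin_le_sin_of_le_of_le_pi_sub (by linarith) hlo (by linarith)
  rw [← cos_sq']
  exact max_le (pow_le_pow_left₀ (sin_nonneg_of_nonneg_of_le_pi hθ0.le (by linarith)) hsin 2)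
    (pow_le_pow_left₀ (cos_nonneg_of_mem_Icc ⟨by linarith, hθ1⟩) hcos 2)

end Trigonometry

section GroverIterate

variable {E : Type*} [NormedAddCommGroup E] [InnerProductSpace ℝ E] [CompleteSpace E]
  {ψ : E} {P Rψ RP : E →L[ℝ] E} {θ : ℝ}

lemma inner_apply_self_eq_norm_sq_of_idempotent (hPsa : IsSelfAdjoint P) (hP2 : P * P = P)
    (x : E) : ⟪x, P x⟫ = ‖P x‖ ^ 2 := by
  calc ⟪x, P x⟫ = ⟪x, P (P x)⟫ := by rw [← mul_apply_eq_comp, hP2]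
    _ = ⟪P x, P x⟫ := (hPsa.isSymmetric x (P x)).symm
    _ = ‖P x‖ ^ 2 := real_inner_self_eq_norm_sq _

lemma grover_step (hψ : ‖ψ‖ = 1) (hPsa : IsSelfAdjoint P) (hP2 : P * P = P)
    (hsin : sin θ = ‖P ψ‖) (hRψ : ∀ x, Rψ x = (2 * ⟪ψ, x⟫) • ψ - x)
    (hRP : RP = (2 : ℝ) • P - 1) (a b : ℝ) :
    (-(Rψ * RP)) (a • P ψ + b • (ψ - P ψ)) =
      (a * cos (2 * θ) + 2 * b * cos θ ^ 2) • P ψ +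
        (b * cos (2 * θ) - 2 * a * sin θ ^ 2) • (ψ - P ψ) := by
  have hPPψ : P (P ψ) = P ψ := by rw [← mul_apply_eq_comp, hP2]
  have hRP_apply : RP (a • P ψ + b • (ψ - P ψ)) = a • P ψ - b • (ψ - P ψ) := by
    simp only [hRP, sub_apply, smul_apply,
      one_apply_eq_self, map_add, map_smul, map_sub, hPPψ]
    module
  have hinner : ⟪ψ, a • P ψ - b • (ψ - P ψ)⟫ = a * sin θ ^ 2 - b * (1 - sin θ ^ 2) := by
    rw [inner_sub_right, real_inner_smul_right, real_inner_smul_right, inner_sub_right,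
      inner_apply_self_eq_norm_sq_of_idempotent hPsa hP2, real_inner_self_eq_norm_sq, hψ, hsin]
    ring
  rw [neg_apply, mul_apply_eq_comp, hRP_apply, hRψ, hinner,
    cos_sq', cos_two_mul, cos_sq']
  module

lemma grover_iterate_apply (hψ : ‖ψ‖ = 1) (hPsa : IsSelfAdjoint P) (hP2 : P * P = P)
    (hsin : sin θ = ‖P ψ‖) (hRψ : ∀ x, Rψ x = (2 * ⟪ψ, x⟫) • ψ - x)
    (hRP : RP = (2 : ℝ) • P - 1) (k : ℕ) :
    ∃ a b : ℝ, ((-(Rψ * RP)) ^ k) ψ = a • P ψ + b • (ψ - P ψ) ∧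
      a * sin θ = sin ((2 * k + 1) * θ) ∧ b * cos θ = cos ((2 * k + 1) * θ) := by
  induction k with
  | zero => exact ⟨1, 1, by simp, by simp, by simp⟩
  | succ k ih =>
    obtain ⟨a, b, hk, ha, hb⟩ := ih
    have hangle : (2 * ((k + 1 : ℕ) : ℝ) + 1) * θ = (2 * k + 1) * θ + 2 * θ := by push_cast; ring
    refine ⟨a * cos (2 * θ) + 2 * b * cos θ ^ 2, b * cos (2 * θ) - 2 * a * sin θ ^ 2, ?_, ?_, ?_⟩
    · rw [pow_succ', mul_apply_eq_comp, hk, grover_step hψ hPsa hP2 hsin hRψ hRP]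
    · rw [hangle, sin_add, ← ha, ← hb, sin_two_mul]; ring
    · rw [hangle, cos_add, ← ha, ← hb, sin_two_mul]; ring

lemma norm_apply_grover_iterate (hψ : ‖ψ‖ = 1) (hPsa : IsSelfAdjoint P) (hP2 : P * P = P)
    (hsin : sin θ = ‖P ψ‖) (hRψ : ∀ x, Rψ x = (2 * ⟪ψ, x⟫) • ψ - x)
    (hRP : RP = (2 : ℝ) • P - 1) (k : ℕ) :
    ‖P (((-(Rψ * RP)) ^ k) ψ)‖ = |sin ((2 * k + 1) * θ)| := by
  obtain ⟨a, b, hk, ha, -⟩ := grover_iterate_apply hψ hPsa hP2 hsin hRψ hRP k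
  have hPPψ : P (P ψ) = P ψ := by rw [← mul_apply_eq_comp, hP2]
  have hs : 0 ≤ sin θ := by rw [hsin]; exact norm_nonneg _
  rw [hk, map_add, map_smul, map_smul, map_sub, hPPψ, sub_self, smul_zero, add_zero, norm_smul,
    Real.norm_eq_abs, ← hsin, ← ha, abs_mul, abs_of_nonneg hs]

end GroverIterate

theorem amplitude_amplification_general
    {E : Type*} [NormedAddCommGroup E] [InnerProductSpace ℝ E] [CompleteSpace E]
    (ψ : E) (hψ : ‖ψ‖ = 1)
    (P : E →L[ℝ] E) (hPsa : IsSelfAdjoint P) (hP2 : P * P = P)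
    (θ : ℝ) (hθ0 : 0 < θ) (hθ1 : θ ≤ π / 2) (hsin : Real.sin θ = ‖P ψ‖)
    (Rψ RP : E →L[ℝ] E)
    (hRψ : ∀ x, Rψ x = (2 * ⟪ψ, x⟫) • ψ - x)
    (hRP : RP = (2 : ℝ) • P - 1)
    (m : ℕ) (hm : m = ⌊π / (4 * θ)⌋₊) :
    max (Real.sin θ ^ 2) (1 - Real.sin θ ^ 2) ≤ ‖P (((-(Rψ * RP)) ^ m) ψ)‖ ^ 2 ∧
    (1 : ℝ) / 2 ≤ ‖P (((-(Rψ * RP)) ^ m) ψ)‖ ^ 2 := by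
  have hbound : max (sin θ ^ 2) (1 - sin θ ^ 2) ≤ ‖P (((-(Rψ * RP)) ^ m) ψ)‖ ^ 2 := by
    rw [norm_apply_grover_iterate hψ hPsa hP2 hsin hRψ hRP, sq_abs, hm]
    exact max_sin_sq_one_sub_sin_sq_le hθ0 hθ1
  have hhalf : (1 : ℝ) / 2 ≤ max (sin θ ^ 2) (1 - sin θ ^ 2) := by
    rcases le_total (sin θ ^ 2) (1 / 2) with h | h
    · exact le_max_of_le_right (by linarith)
    · exact le_max_of_le_left h
  exact ⟨hbound, hhalf.trans hbound⟩

/-- Amplitude amplification (Brassard–Høyer–Mosca–Tapp): with `sin θ = ‖Πψ‖`,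
`θ ∈ (0, π/2]` and `m = ⌊π/(4θ)⌋` applications of the Grover iterate
`−R_ψ R_Π`, the squared overlap with the image of `Π` is at least
`max(sin²θ, 1−sin²θ) ≥ 1/2`. -/
theorem amplitude_amplification
    {E : Type*} [NormedAddCommGroup E] [InnerProductSpace ℝ E] [CompleteSpace E]
    (ψ : E) (hψ : ‖ψ‖ = 1)
    (P : E →L[ℝ] E) (hPsa : IsSelfAdjoint P) (hP2 : P * P = P)
    (hPψ : P ψ ≠ 0)
    (θ : ℝ) (hθ0 : 0 < θ) (hθ1 : θ ≤ π / 2) (hsin : Real.sin θ = ‖P ψ‖)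
    (Rψ RP : E →L[ℝ] E)
    (hRψ : ∀ x, Rψ x = (2 * ⟪ψ, x⟫) • ψ - x)
    (hRP : RP = (2 : ℝ) • P - 1)
    (m : ℕ) (hm : m = ⌊π / (4 * θ)⌋₊) :
    max (Real.sin θ ^ 2) (1 - Real.sin θ ^ 2) ≤ ‖P (((-(Rψ * RP)) ^ m) ψ)‖ ^ 2 ∧
    (1 : ℝ) / 2 ≤ ‖P (((-(Rψ * RP)) ^ m) ψ)‖ ^ 2 :=
  amplitude_amplification_general ψ hψ P hPsa hP2 θ hθ0 hθ1 hsin Rψ RP hRψ hRP m hm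
end

section
/- Let ψ be a unit vector, Π an orthogonal projection, and θ ∈ (0, π/2] with sin θ = ‖Πψ‖. In the two-dimensional subspace spanned by the unit vectors Πψ/‖Πψ‖ and (I−Π)ψ/‖(I−Π)ψ‖ (assuming both are nonzero), the operator −R_ψ R_Π with R_ψ = 2|ψ⟩⟨ψ|−I and R_Π = 2Π−I acts as a rotation by angle 2θ; consequently, (−R_ψ R_Π)^m ψ = sin((2m+1)θ)·Πψ/‖Πψ‖ + cos((2m+1)θ)·(I−Π)ψ/‖(I−Π)ψ‖. -/
/-!
Parametrise the plane spanned by `u = Πψ/‖Πψ‖` and `v = (I-Π)ψ/‖(I-Π)ψ‖` by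
`α ↦ sin α • u + cos α • v`, so that `ψ` sits at `α = θ`. The reflection `R_Π` sends `α` to
`π - α`, and `-R_ψ`, the reflection in the hyperplane `ψᗮ`, sends `α` to `2θ + π - α`; hence
`-R_ψ R_Π` is the rotation `α ↦ α + 2θ`, and `m` of them move `ψ` to `α = (2m + 1)θ`.
-/

open Real RealInnerProductSpace

section

open NormedSpace ContinuousLinearMap

variable {E : Type*} [NormedAddCommGroup E] [InnerProductSpace ℝ E]

theorem real_inner_normalize_of_inner_eq_norm_sq {x w : E} (h : ⟪x, w⟫ = ‖w‖ ^ 2) :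
    ⟪x, normalize w⟫ = ‖w‖ := by
  rw [NormedSpace.normalize, real_inner_smul_right, h, sq, ← mul_assoc, inv_mul_mul_self]

theorem norm_smul_normalize_add_norm_smul_normalize_sub (x y : E) :
    ‖y‖ • normalize y + ‖x - y‖ • normalize (x - y) = x := by
  rw [norm_smul_normalize, norm_smul_normalize, add_sub_cancel]

namespace IsStarProjection

variable [CompleteSpace E] {p : E →L[ℝ] E}

theorem apply_apply (hp : IsStarProjection p) (x : E) : p (p x) = p x :=
  congr($hp.isIdempotentElem.eq x)

theorem apply_sub_apply (hp : IsStarProjection p) (x : E) : p (x - p x) = 0 := by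
  rw [map_sub, hp.apply_apply, sub_self]

theorem real_inner_apply_eq_norm_sq (hp : IsStarProjection p) (x : E) :
    ⟪x, p x⟫ = ‖p x‖ ^ 2 := by
  simpa [hp.apply_apply] using (hp.isSelfAdjoint.isSymmetric x (p x)).symm

theorem real_inner_sub_apply_eq_norm_sq (hp : IsStarProjection p) (x : E) :
    ⟪x, x - p x⟫ = ‖x - p x‖ ^ 2 := by
  simpa using hp.one_sub.real_inner_apply_eq_norm_sq x

theorem norm_apply_sq_add_norm_sub_apply_sq (hp : IsStarProjection p) (x : E) :
    ‖p x‖ ^ 2 + ‖x - p x‖ ^ 2 = ‖x‖ ^ 2 := by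
  rw [← hp.real_inner_apply_eq_norm_sq, ← hp.real_inner_sub_apply_eq_norm_sq, ← inner_add_right,
    add_sub_cancel, real_inner_self_eq_norm_sq]

theorem real_inner_normalize_apply (hp : IsStarProjection p) (x : E) :
    ⟪x, normalize (p x)⟫ = ‖p x‖ :=
  real_inner_normalize_of_inner_eq_norm_sq (hp.real_inner_apply_eq_norm_sq x)

theorem real_inner_normalize_sub_apply (hp : IsStarProjection p) (x : E) :
    ⟪x, normalize (x - p x)⟫ = ‖x - p x‖ :=
  real_inner_normalize_of_inner_eq_norm_sq (hp.real_inner_sub_apply_eq_norm_sq x)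

theorem two_smul_sub_one_apply_normalize_apply (hp : IsStarProjection p) (x : E) :
    ((2 : ℝ) • p - 1) (normalize (p x)) = normalize (p x) := by
  rw [sub_apply, smul_apply, one_apply_eq_self, NormedSpace.normalize, map_smul, hp.apply_apply,
    two_smul, add_sub_cancel_right]

theorem two_smul_sub_one_apply_normalize_sub_apply (hp : IsStarProjection p) (x : E) :
    ((2 : ℝ) • p - 1) (normalize (x - p x)) = -normalize (x - p x) := by
  rw [sub_apply, smul_apply, one_apply_eq_self, NormedSpace.normalize, map_smul,
    hp.apply_sub_apply, smul_zero, smul_zero, zero_sub]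

end IsStarProjection

theorem neg_mul_apply_sin_smul_add_cos_smul {ψ u v : E} {θ : ℝ}
    (hψ : ψ = sin θ • u + cos θ • v) (hu : ⟪ψ, u⟫ = sin θ) (hv : ⟪ψ, v⟫ = cos θ)
    {Rψ RP : E →L[ℝ] E} (hRψ : ∀ x, Rψ x = (2 * ⟪ψ, x⟫) • ψ - x)
    (hRPu : RP u = u) (hRPv : RP v = -v) (α : ℝ) :
    (-(Rψ * RP)) (sin α • u + cos α • v) = sin (α + 2 * θ) • u + cos (α + 2 * θ) • v := by
  have hRP : RP (sin α • u + cos α • v) = sin α • u - cos α • v := by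
    rw [map_add, map_smul, map_smul, hRPu, hRPv, smul_neg, sub_eq_add_neg]
  have hinner : ⟪ψ, sin α • u - cos α • v⟫ = -cos (α + θ) := by
    rw [inner_sub_right, real_inner_smul_right, real_inner_smul_right, hu, hv, cos_add]
    ring
  have hsin : sin (α + 2 * θ) = sin α + 2 * cos (α + θ) * sin θ := by
    calc sin (α + 2 * θ) = sin (α + θ + θ) := by ring_nf
      _ = sin (α + θ - θ) + 2 * cos (α + θ) * sin θ := by rw [sin_add, sin_sub]; ring
      _ = sin α + 2 * cos (α + θ) * sin θ := by rw [add_sub_cancel_right]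
  have hcos : cos (α + 2 * θ) = -cos α + 2 * cos (α + θ) * cos θ := by
    calc cos (α + 2 * θ) = cos (α + θ + θ) := by ring_nf
      _ = -cos (α + θ - θ) + 2 * cos (α + θ) * cos θ := by rw [cos_add, cos_sub]; ring
      _ = -cos α + 2 * cos (α + θ) * cos θ := by rw [add_sub_cancel_right]
  rw [neg_apply, mul_apply_eq_comp, hRP, hRψ, hinner, hsin, hcos, hψ]
  module

theorem pow_apply_sin_smul_add_cos_smul (G : E →L[ℝ] E) {u v : E} {β : ℝ}
    (hG : ∀ α, G (sin α • u + cos α • v) = sin (α + β) • u + cos (α + β) • v) (α : ℝ) (m : ℕ) :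
    (G ^ m) (sin α • u + cos α • v) = sin (α + m * β) • u + cos (α + m * β) • v := by
  induction m with
  | zero => simp
  | succ m ih =>
    rw [pow_succ', mul_apply_eq_comp, ih, hG, Nat.cast_succ, add_one_mul, add_assoc]

end

theorem grover_iterate_rotation_general
    {E : Type*} [NormedAddCommGroup E] [InnerProductSpace ℝ E] [CompleteSpace E]
    (ψ : E) (hψ : ‖ψ‖ = 1)
    (P : E →L[ℝ] E) (hPsa : IsSelfAdjoint P) (hP2 : P * P = P)
    (θ : ℝ) (hθ0 : 0 < θ) (hθ1 : θ ≤ π / 2) (hsin : Real.sin θ = ‖P ψ‖)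
    (Rψ RP : E →L[ℝ] E)
    (hRψ : ∀ x, Rψ x = (2 * ⟪ψ, x⟫) • ψ - x)
    (hRP : RP = (2 : ℝ) • P - 1)
    (m : ℕ) :
    ((-(Rψ * RP)) ^ m) ψ =
      Real.sin ((2 * m + 1) * θ) • (‖P ψ‖⁻¹ • P ψ) +
      Real.cos ((2 * m + 1) * θ) • (‖ψ - P ψ‖⁻¹ • (ψ - P ψ)) := by
  have hP : IsStarProjection P := ⟨hP2, hPsa⟩
  have hcos : cos θ = ‖ψ - P ψ‖ := by
    have hcos_nonneg : 0 ≤ cos θ := cos_nonneg_of_mem_Icc ⟨by linarith [pi_pos], hθ1⟩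
    have hpythagoras := hP.norm_apply_sq_add_norm_sub_apply_sq ψ
    rw [hψ, ← hsin] at hpythagoras
    exact (sq_eq_sq₀ hcos_nonneg (norm_nonneg _)).1
      (by linear_combination sin_sq_add_cos_sq θ - hpythagoras)
  have hdecomp :
      sin θ • NormedSpace.normalize (P ψ) + cos θ • NormedSpace.normalize (ψ - P ψ) = ψ := by
    rw [hsin, hcos, norm_smul_normalize_add_norm_smul_normalize_sub]
  have hstep := neg_mul_apply_sin_smul_add_cos_smul hdecomp.symm
    (hsin ▸ hP.real_inner_normalize_apply ψ) (hcos ▸ hP.real_inner_normalize_sub_apply ψ) hRψ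
    (hRP ▸ hP.two_smul_sub_one_apply_normalize_apply ψ)
    (hRP ▸ hP.two_smul_sub_one_apply_normalize_sub_apply ψ)
  have hrotate := pow_apply_sin_smul_add_cos_smul _ hstep θ m
  rw [hdecomp, show θ + m * (2 * θ) = (2 * m + 1) * θ by ring] at hrotate
  exact hrotate

/-- Rotation lemma for amplitude amplification: the Grover iterate `−R_ψ R_Π`
acts as a rotation by `2θ` in the plane spanned by `Πψ/‖Πψ‖` and
`(I−Π)ψ/‖(I−Π)ψ‖`, so that `m` iterations rotate `ψ` to angle `(2m+1)θ`. -/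
theorem grover_iterate_rotation
    {E : Type*} [NormedAddCommGroup E] [InnerProductSpace ℝ E] [CompleteSpace E]
    (ψ : E) (hψ : ‖ψ‖ = 1)
    (P : E →L[ℝ] E) (hPsa : IsSelfAdjoint P) (hP2 : P * P = P)
    (hPψ : P ψ ≠ 0) (hPψ' : ψ - P ψ ≠ 0)
    (θ : ℝ) (hθ0 : 0 < θ) (hθ1 : θ ≤ π / 2) (hsin : Real.sin θ = ‖P ψ‖)
    (Rψ RP : E →L[ℝ] E)
    (hRψ : ∀ x, Rψ x = (2 * ⟪ψ, x⟫) • ψ - x)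
    (hRP : RP = (2 : ℝ) • P - 1)
    (m : ℕ) :
    ((-(Rψ * RP)) ^ m) ψ =
      Real.sin ((2 * m + 1) * θ) • (‖P ψ‖⁻¹ • P ψ) +
      Real.cos ((2 * m + 1) * θ) • (‖ψ - P ψ‖⁻¹ • (ψ - P ψ)) :=
  grover_iterate_rotation_general ψ hψ P hPsa hP2 θ hθ0 hθ1 hsin Rψ RP hRψ hRP m
end
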